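/- Suppose μ' ∈ M(G) (signed measures on a compact space G) represents an element not in the cone M₊ of classes with a nonnegative representative modulo a closed subspace N = Ker R* (i.e. μ' + N contains no nonnegative measure), but g + N = μ' + N for some continuous g with min g = -C, C > 0. Consider μ_λ = (1-λ)μ' + λ·1. Then: (a) the set of λ ∈ [0,1] with μ_λ + N ∈ M₊ is a closed interval [λ₀, 1] with λ₀ ∈ (0,1); (b) μ_{C/(1+C)} + N ∈ M₊. -/
import Mathlib


open MeasureTheory

theorem stmt19 {G : Type*} [MetricSpace G] [CompactSpace G] [MeasurableSpace G] [BorelSpace G]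
    -- the reference probability measure on `G`
    (σ : Measure G) [IsProbabilityMeasure σ]
    -- the embedding of continuous densities into `M(G)`, viewed as the weak-* dual of `C(G)`
    (ι : C(G, ℝ) →ₗ[ℝ] WeakDual ℝ C(G, ℝ))
    (hι : ∀ g f : C(G, ℝ), ι g f = ∫ x, g x * f x ∂σ)
    -- `N = Ker R*`, a weak-* closed subspace
    (N : Submodule ℝ (WeakDual ℝ C(G, ℝ))) (hN : IsClosed (N : Set (WeakDual ℝ C(G, ℝ))))
    -- the cone of elements with a nonnegative representative mod `N`, weak-* closed
    (MplusN : Set (WeakDual ℝ C(G, ℝ)))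
    (hMplusN : MplusN = {μ | ∃ p : WeakDual ℝ C(G, ℝ),
      (∀ f : C(G, ℝ), (∀ x, 0 ≤ f x) → 0 ≤ p f) ∧ ∃ ν ∈ N, μ = p + ν})
    (hMclosed : IsClosed MplusN)
    -- `μ'` has no nonnegative representative mod `N` …
    (μ' : WeakDual ℝ C(G, ℝ)) (hnot : μ' ∉ MplusN)
    -- … but is represented mod `N` by a continuous density `g` with `min g = -C < 0`
    (g : C(G, ℝ)) (C : ℝ) (hC : 0 < C)
    (hgC : ∀ x, -C ≤ g x) (hgmin : ∃ x, g x = -C)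
    (hrep : μ' - ι g ∈ N) :
    (∃ lam₀ : ℝ, 0 < lam₀ ∧ lam₀ < 1 ∧
      {lam : ℝ | lam ∈ Set.Icc (0 : ℝ) 1 ∧
        ((1 - lam) • μ' + lam • ι 1) ∈ MplusN} = Set.Icc lam₀ 1) ∧
    ((1 - C / (1 + C)) • μ' + (C / (1 + C)) • ι 1) ∈ MplusN := by
  have hone : ι 1 ∈ MplusN := by
    rw [hMplusN]
    refine ⟨ι 1, ?_, 0, N.zero_mem, by simp⟩
    intro f hf
    rw [hι]
    exact integral_nonneg fun x => by simpa using hf x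
  set lb : ℝ := C / (1 + C) with hlb
  have h1C : (0:ℝ) < 1 + C := by linarith
  have hlb0 : 0 < lb := div_pos hC h1C
  have hlb1 : lb < 1 := (div_lt_one h1C).2 (by linarith)
  have hlbC : lb * (1 + C) = C := div_mul_cancel₀ C (ne_of_gt h1C)
  -- part (b)
  have hb : ((1 - lb) • μ' + lb • ι 1) ∈ MplusN := by
    rw [hMplusN]
    refine ⟨ι ((1 - lb) • g + lb • (1 : C(G,ℝ))), ?_,
      (1 - lb) • (μ' - ι g), N.smul_mem _ hrep, ?_⟩
    · intro f hf
      rw [hι]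
      refine integral_nonneg fun x => mul_nonneg ?_ (hf x)
      have hg := hgC x
      simp only [ContinuousMap.add_apply, ContinuousMap.smul_apply, ContinuousMap.one_apply,
        smul_eq_mul, mul_one]
      nlinarith [mul_le_mul_of_nonneg_left hg (by linarith : (0:ℝ) ≤ 1 - lb)]
    · rw [map_add, LinearMap.map_smul, LinearMap.map_smul]
      module
  -- convexity of MplusN
  have hconv : ∀ x ∈ MplusN, ∀ y ∈ MplusN, ∀ a b : ℝ, 0 ≤ a → 0 ≤ b → a + b = 1 →
      a • x + b • y ∈ MplusN := by
    intro x hx y hy a b ha hb' hab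
    rw [hMplusN] at hx hy ⊢
    obtain ⟨p₁, hp₁, ν₁, hν₁, rfl⟩ := hx
    obtain ⟨p₂, hp₂, ν₂, hν₂, rfl⟩ := hy
    refine ⟨a • p₁ + b • p₂, ?_,
      a • ν₁ + b • ν₂, N.add_mem (N.smul_mem _ hν₁) (N.smul_mem _ hν₂), by module⟩
    intro f hf
    have h1 := hp₁ f hf
    have h2 := hp₂ f hf
    show 0 ≤ (a • p₁ + b • p₂) f
    have : (a • p₁ + b • p₂) f = a * p₁ f + b * p₂ f := rfl
    rw [this]
    positivity
  -- the map λ ↦ μ_λ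
  set φ : ℝ → WeakDual ℝ C(G,ℝ) := fun lam => (1 - lam) • μ' + lam • ι 1 with hφ
  have hφc : Continuous φ := by
    apply WeakBilin.continuous_of_continuous_eval
    intro f
    have : (fun a => (topDualPairing ℝ C(G,ℝ)) (φ a) f)
        = fun a => (1 - a) * μ' f + a * (ι 1) f := rfl
    rw [this]
    exact ((continuous_const.sub continuous_id).mul continuous_const).add
      (continuous_id.mul continuous_const)
  set S : Set ℝ := Set.Icc 0 1 ∩ φ ⁻¹' MplusN with hS
  have hSclosed : IsClosed S := isClosed_Icc.inter (hMclosed.preimage hφc)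
  have hφ1 : φ 1 = ι 1 := by simp [hφ]
  have h1S : (1:ℝ) ∈ S := ⟨⟨zero_le_one, le_refl 1⟩, by simp [Set.mem_preimage, hφ1, hone]⟩
  have hlbS : lb ∈ S := ⟨⟨hlb0.le, hlb1.le⟩, hb⟩
  have hbdd : BddBelow S := ⟨0, fun x hx => hx.1.1⟩
  set lam₀ : ℝ := sInf S with hlam₀
  have hlam₀S : lam₀ ∈ S := hSclosed.csInf_mem ⟨1, h1S⟩ hbdd
  have hlam₀lb : lam₀ ≤ lb := csInf_le hbdd hlbS
  have hφ0 : φ 0 = μ' := by simp [hφ]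
  have hlam₀pos : 0 < lam₀ := by
    rcases lt_or_eq_of_le hlam₀S.1.1 with h | h
    · exact h
    · exfalso
      apply hnot
      have := hlam₀S.2
      rw [Set.mem_preimage, ← h, hφ0] at this
      exact this
  refine ⟨⟨lam₀, hlam₀pos, lt_of_le_of_lt hlam₀lb hlb1, ?_⟩, hb⟩
  ext lam
  simp only [Set.mem_setOf_eq, Set.mem_Icc]
  constructor
  · intro hlam
    have : lam ∈ S := ⟨hlam.1, hlam.2⟩
    exact ⟨csInf_le hbdd this, hlam.1.2⟩
  · rintro ⟨h₀, h₁⟩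
    have hlam₀1 : lam₀ < 1 := lt_of_le_of_lt hlam₀lb hlb1
    set t : ℝ := (lam - lam₀) / (1 - lam₀) with ht
    have ht0 : 0 ≤ t := div_nonneg (by linarith) (by linarith)
    have ht1 : t ≤ 1 := (div_le_one (by linarith)).2 (by linarith)
    have hne : (1:ℝ) - lam₀ ≠ 0 := ne_of_gt (by linarith)
    have hlameq : (1 - t) * lam₀ + t = lam := by
      have h' : t * (1 - lam₀) = lam - lam₀ := div_mul_cancel₀ _ hne
      linear_combination h'
    have hmem := hconv (φ lam₀) hlam₀S.2 (ι 1) hone (1 - t) t (by linarith) ht0 (by ring)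
    have key : (1 - lam) • μ' + lam • ι 1
        = (1 - t) • φ lam₀ + t • ι 1 := by
      rw [← hlameq, hφ]
      module
    constructor
    · exact ⟨le_trans hlam₀pos.le h₀, h₁⟩
    · rw [key]; exact hmem
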